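/- Let K, L be convex bodies in ℝ³ containing the origin in their interiors, with relative quermassintegrals W₀, W₁, W₂, W₃ of K with respect to L. If K is in the class ℜ₁ with respect to L, then L is in the class ℜ₂ with respect to K; explicitly, if 2W₁ r − W₀ − W₂ r² ≥ 0 for all r ∈ [r_o(K,L), R_o(K,L)], then 2W₁ r − W₂ − W₀ r² ≥ 0 for all r ∈ [r_o(L,K), R_o(L,K)] (note that the relative quermassintegrals of L with respect to K are W₃, W₂, W₁, W₀, since V(L + tK) = Σ_{i=0}^{3} C(3,i) W_{3−i} tⁱ). -/
import Mathlib


open scoped Pointwise RealInnerProductSpace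
open MeasureTheory Metric

noncomputable section

/-- The support function `h_K(u) = sup_{x ∈ K} ⟨x, u⟩` of a set `K ⊆ ℝ³`. -/
def supp (K : Set (EuclideanSpace ℝ (Fin 3))) (u : EuclideanSpace ℝ (Fin 3)) : ℝ :=
  sSup ((fun x => ⟪x, u⟫) '' K)

/-- `r_o(K,L) = min_{u ∈ S²} h_K(u)/h_L(u)`. -/
def rIn (K L : Set (EuclideanSpace ℝ (Fin 3))) : ℝ :=
  sInf ((fun u => supp K u / supp L u) '' sphere (0 : EuclideanSpace ℝ (Fin 3)) 1)

/-- `R_o(K,L) = max_{u ∈ S²} h_K(u)/h_L(u)`. -/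
def rOut (K L : Set (EuclideanSpace ℝ (Fin 3))) : ℝ :=
  sSup ((fun u => supp K u / supp L u) '' sphere (0 : EuclideanSpace ℝ (Fin 3)) 1)

lemma supp_image_bddAbove {C : Set (EuclideanSpace ℝ (Fin 3))} (hc : IsCompact C)
    (u : EuclideanSpace ℝ (Fin 3)) : BddAbove ((fun x => ⟪x, u⟫) '' C) :=
  (hc.image (Continuous.inner continuous_id continuous_const)).bddAbove

lemma supp_lb_aux {C : Set (EuclideanSpace ℝ (Fin 3))} (hc : IsCompact C)
    {ε : ℝ} (hε : 0 < ε) (hball : ball (0 : EuclideanSpace ℝ (Fin 3)) ε ⊆ C)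
    {u : EuclideanSpace ℝ (Fin 3)} (hu : ‖u‖ = 1) : ε / 2 ≤ supp C u := by
  have hx : (ε / 2) • u ∈ C := by
    apply hball
    rw [mem_ball_zero_iff, norm_smul, hu, Real.norm_eq_abs]
    rw [mul_one, abs_of_pos (by linarith)]
    linarith
  have hip : ⟪(ε / 2) • u, u⟫ = ε / 2 := by
    rw [real_inner_smul_left, real_inner_self_eq_norm_sq, hu]
    ring
  have := le_csSup (supp_image_bddAbove hc u) (Set.mem_image_of_mem _ hx)
  rwa [hip] at this

lemma supp_le_aux {C : Set (EuclideanSpace ℝ (Fin 3))} (hCne : C.Nonempty)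
    {R : ℝ} (hR : ∀ x ∈ C, ‖x‖ ≤ R) {u : EuclideanSpace ℝ (Fin 3)}
    (hu : ‖u‖ = 1) : supp C u ≤ R := by
  apply csSup_le (hCne.image _)
  rintro _ ⟨x, hx, rfl⟩
  calc ⟪x, u⟫ ≤ ‖x‖ * ‖u‖ := real_inner_le_norm x u
    _ = ‖x‖ := by rw [hu, mul_one]
    _ ≤ R := hR x hx

/-- If `K` is in the class `ℜ₁` with respect to `L`, then `L` is in the class `ℜ₂`
with respect to `K`: if `2W₁ r − W₀ − W₂ r² ≥ 0` on `[r_o(K,L), R_o(K,L)]`, then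
`2W₁ r − W₂ − W₀ r² ≥ 0` on `[r_o(L,K), R_o(L,K)]`. -/
theorem class_R1_implies_reverse_R2
    (K L : Set (EuclideanSpace ℝ (Fin 3)))
    (hKc : IsCompact K) (hKconv : Convex ℝ K) (hKint : (interior K).Nonempty)
    (hLc : IsCompact L) (hLconv : Convex ℝ L) (hLint : (interior L).Nonempty)
    (hK0 : (0 : EuclideanSpace ℝ (Fin 3)) ∈ interior K)
    (hL0 : (0 : EuclideanSpace ℝ (Fin 3)) ∈ interior L)
    (W₀ W₁ W₂ W₃ : ℝ)
    (hW : ∀ t : ℝ, 0 ≤ t →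
      (volume (K + t • L)).toReal = W₀ + 3 * W₁ * t + 3 * W₂ * t ^ 2 + W₃ * t ^ 3)
    (hR1 : ∀ r ∈ Set.Icc (rIn K L) (rOut K L), 2 * W₁ * r - W₀ - W₂ * r ^ 2 ≥ 0) :
    ∀ r ∈ Set.Icc (rIn L K) (rOut L K), 2 * W₁ * r - W₂ - W₀ * r ^ 2 ≥ 0 := by
  have hKne : K.Nonempty := ⟨0, interior_subset hK0⟩
  have hLne : L.Nonempty := ⟨0, interior_subset hL0⟩
  obtain ⟨RK, hRK⟩ := hKc.isBounded.exists_norm_le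
  obtain ⟨RL, hRL⟩ := hLc.isBounded.exists_norm_le
  obtain ⟨εK, hεK, hballK⟩ := Metric.mem_nhds_iff.1 (mem_interior_iff_mem_nhds.1 hK0)
  obtain ⟨εL, hεL, hballL⟩ := Metric.mem_nhds_iff.1 (mem_interior_iff_mem_nhds.1 hL0)
  set f : EuclideanSpace ℝ (Fin 3) → ℝ := fun u => supp K u / supp L u with hf
  set g : EuclideanSpace ℝ (Fin 3) → ℝ := fun u => supp L u / supp K u with hg
  set sph := sphere (0 : EuclideanSpace ℝ (Fin 3)) 1 with hsph
  set S := f '' sph with hS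
  set T := g '' sph with hT
  have hsphne : sph.Nonempty := NormedSpace.sphere_nonempty.2 zero_le_one
  have hSne : S.Nonempty := hsphne.image f
  have hTne : T.Nonempty := hsphne.image g
  have hmemsph : ∀ u ∈ sph, ‖u‖ = 1 := by
    intro u hu; rwa [mem_sphere_zero_iff_norm] at hu
  have hKlb : ∀ u ∈ sph, εK / 2 ≤ supp K u := fun u hu =>
    supp_lb_aux hKc hεK hballK (hmemsph u hu)
  have hLlb : ∀ u ∈ sph, εL / 2 ≤ supp L u := fun u hu =>
    supp_lb_aux hLc hεL hballL (hmemsph u hu)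
  have hKub : ∀ u ∈ sph, supp K u ≤ RK := fun u hu =>
    supp_le_aux hKne hRK (hmemsph u hu)
  have hLub : ∀ u ∈ sph, supp L u ≤ RL := fun u hu =>
    supp_le_aux hLne hRL (hmemsph u hu)
  have hsuppKpos : ∀ u ∈ sph, 0 < supp K u := fun u hu =>
    lt_of_lt_of_le (by linarith) (hKlb u hu)
  have hsuppLpos : ∀ u ∈ sph, 0 < supp L u := fun u hu =>
    lt_of_lt_of_le (by linarith) (hLlb u hu)
  have hfpos : ∀ u ∈ sph, 0 < f u := fun u hu =>
    div_pos (hsuppKpos u hu) (hsuppLpos u hu)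
  have hginv : ∀ u ∈ sph, g u = (f u)⁻¹ := by
    intro u hu
    simp only [hf, hg, inv_div]
  -- bounds for S
  have hRLpos : (0 : ℝ) < RL := by
    obtain ⟨u, hu⟩ := hsphne
    exact lt_of_lt_of_le (hsuppLpos u hu) (hLub u hu)
  have hfub : ∀ u ∈ sph, f u ≤ RK / (εL / 2) := by
    intro u hu
    exact div_le_div₀ (le_trans (hsuppKpos u hu).le (hKub u hu)) (hKub u hu)
      (by linarith) (hLlb u hu)
  have hflb : ∀ u ∈ sph, (εK / 2) / RL ≤ f u := by
    intro u hu
    exact div_le_div₀ (hsuppKpos u hu).le (hKlb u hu) (hsuppLpos u hu) (hLub u hu)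
  have hbddS : BddAbove S := ⟨RK / (εL / 2), by rintro _ ⟨u, hu, rfl⟩; exact hfub u hu⟩
  have hbddSb : BddBelow S := ⟨(εK / 2) / RL, by rintro _ ⟨u, hu, rfl⟩; exact hflb u hu⟩
  have hsInfSpos : 0 < sInf S := by
    have h1 : (εK / 2) / RL ≤ sInf S :=
      le_csInf hSne (by rintro _ ⟨u, hu, rfl⟩; exact hflb u hu)
    have hm : (0 : ℝ) < (εK / 2) / RL := div_pos (by linarith) hRLpos
    linarith
  have hsSupSpos : 0 < sSup S := by
    obtain ⟨u, hu⟩ := hsphne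
    exact lt_of_lt_of_le (hfpos u hu) (le_csSup hbddS (Set.mem_image_of_mem f hu))
  -- relations between T and S
  have hTlb : (sSup S)⁻¹ ≤ sInf T := by
    apply le_csInf hTne
    rintro _ ⟨u, hu, rfl⟩
    rw [hginv u hu]
    exact inv_anti₀ (hfpos u hu) (le_csSup hbddS (Set.mem_image_of_mem f hu))
  have hTub : sSup T ≤ (sInf S)⁻¹ := by
    apply csSup_le hTne
    rintro _ ⟨u, hu, rfl⟩
    rw [hginv u hu]
    exact inv_anti₀ hsInfSpos (csInf_le hbddSb (Set.mem_image_of_mem f hu))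
  -- main argument
  intro r hr
  obtain ⟨hr1, hr2⟩ := hr
  have hr1' : sInf T ≤ r := hr1
  have hr2' : r ≤ sSup T := hr2
  have hrpos : 0 < r := lt_of_lt_of_le (inv_pos.2 hsSupSpos) (le_trans hTlb hr1')
  set s := r⁻¹ with hs
  have hspos : 0 < s := inv_pos.2 hrpos
  have hs_le : s ≤ sSup S := by
    have h1 : (sSup S)⁻¹ ≤ r := le_trans hTlb hr1'
    have h2 := inv_anti₀ (inv_pos.2 hsSupSpos) h1
    rwa [inv_inv] at h2
  have hs_ge : sInf S ≤ s := by
    have h1 : r ≤ (sInf S)⁻¹ := le_trans hr2' hTub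
    have h2 := inv_anti₀ hrpos h1
    rwa [inv_inv] at h2
  have hB := hR1 s ⟨hs_ge, hs_le⟩
  have key : 2 * W₁ * r - W₂ - W₀ * r ^ 2 = r ^ 2 * (2 * W₁ * s - W₀ - W₂ * s ^ 2) := by
    rw [hs]
    field_simp
    ring
  rw [key]
  exact mul_nonneg (sq_nonneg r) hB
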